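/- arXiv:1401.1590 — 7 statements merged into one kernel-verified Lean document; each statement's English description precedes it below -/
import Mathlib

section
/- Let V : S → ℝ be monotone, s^r ∈ S and z^r ∈ ℝ. Define the feasible set 𝒱(s^r, z^r) = { V' : S → ℝ : V'(s^r) = z^r and V' is monotone }. Then Π_M(s^r, z^r, V) belongs to 𝒱(s^r, z^r), and for every V' ∈ 𝒱(s^r, z^r), ∑_{s∈S} (Π_M(s^r,z^r,V)(s) − V(s))² ≤ ∑_{s∈S} (V'(s) − V(s))²; that is, Π_M(s^r,z^r,V) minimizes the Euclidean distance to V over all monotone functions whose value at s^r equals z^r. -/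
/-!
Optimality holds summand by summand: a feasible `V'` satisfies `z^r ≤ V' s` above `s^r` and
`V' s ≤ z^r` below it, and `Π_M` moves `V s` to the nearest point of that half-line (of `{z^r}` at
`s^r` itself, of `ℝ` at states incomparable with `s^r`). Monotonicity of `Π_M` follows from that of `V` by bounding each
value of `Π_M` by `z^r` or by `V s`, on the side fixed by the position of `s` relative to `s^r`.
-/

open scoped Classical

/-- The monotonicity-preserving projection `Π_M(s^r, z^r, V)`: the value at the reference
point `s^r` is set to `z^r`, values at states above `s^r` are raised to at least `z^r`,
values at states below `s^r` are lowered to at most `z^r`, and all other values are kept. -/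
noncomputable def projMono {S : Type} [PartialOrder S] (sr : S) (zr : ℝ) (V : S → ℝ) :
    S → ℝ :=
  fun s =>
    if s = sr then zr
    else if sr ≤ s then max zr (V s)
    else if s ≤ sr then min zr (V s)
    else V s

theorem sq_max_sub_le {a x y : ℝ} (hay : a ≤ y) : (max a x - x) ^ 2 ≤ (y - x) ^ 2 := by
  rcases le_total a x with hax | hxa
  · rw [max_eq_right hax, sub_self, sq, zero_mul]
    positivity
  · rw [max_eq_left hxa]
    exact pow_le_pow_left₀ (sub_nonneg.2 hxa) (sub_le_sub_right hay x) 2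

theorem sq_min_sub_le {a x y : ℝ} (hya : y ≤ a) : (min a x - x) ^ 2 ≤ (y - x) ^ 2 := by
  rcases le_total x a with hxa | hax
  · rw [min_eq_right hxa, sub_self, sq, zero_mul]
    positivity
  · rw [min_eq_left hax, ← neg_sq, neg_sub, ← neg_sq (y - x), neg_sub]
    exact pow_le_pow_left₀ (sub_nonneg.2 hax) (sub_le_sub_left hya x) 2

section projMono

variable {S : Type} [PartialOrder S] (sr : S) (zr : ℝ) (V : S → ℝ) {s : S}

theorem projMono_self : projMono sr zr V sr = zr := by
  simp [projMono]

theorem le_projMono_of_le (h : sr ≤ s) : zr ≤ projMono sr zr V s := by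
  unfold projMono
  split_ifs <;> first | exact le_rfl | exact le_max_left _ _

theorem projMono_le_of_le (h : s ≤ sr) : projMono sr zr V s ≤ zr := by
  unfold projMono
  split_ifs with hs hrs
  · exact le_rfl
  · exact absurd (le_antisymm h hrs) hs
  · exact min_le_left _ _

theorem le_projMono_of_not_le (h : ¬ s ≤ sr) : V s ≤ projMono sr zr V s := by
  unfold projMono
  split_ifs with hs <;> first | exact absurd hs.le h | exact le_max_right _ _ | exact le_rfl

theorem projMono_le_of_not_le (h : ¬ sr ≤ s) : projMono sr zr V s ≤ V s := by
  unfold projMono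
  split_ifs with hs <;> first | exact absurd hs.ge h | exact min_le_right _ _ | exact le_rfl

theorem projMono_le_max : projMono sr zr V s ≤ max zr (V s) := by
  unfold projMono
  split_ifs
  exacts [le_max_left _ _, le_rfl, (min_le_left _ _).trans (le_max_left _ _), le_max_right _ _]

theorem min_le_projMono : min zr (V s) ≤ projMono sr zr V s := by
  unfold projMono
  split_ifs
  exacts [min_le_left _ _, (min_le_left _ _).trans (le_max_left _ _), le_rfl, min_le_right _ _]

variable {V}

theorem projMono_monotone (hV : Monotone V) : Monotone (projMono sr zr V) := by
  intro a b hab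
  by_cases ha : sr ≤ a
  · by_cases hb : b ≤ sr
    · rw [le_antisymm hab (hb.trans ha)]
    · calc projMono sr zr V a ≤ max zr (V a) := projMono_le_max sr zr V
        _ ≤ projMono sr zr V b :=
          max_le (le_projMono_of_le sr zr V (ha.trans hab))
            ((hV hab).trans (le_projMono_of_not_le sr zr V hb))
  · by_cases hb : b ≤ sr
    · calc projMono sr zr V a ≤ min zr (V b) :=
          le_min (projMono_le_of_le sr zr V (hab.trans hb))
            ((projMono_le_of_not_le sr zr V ha).trans (hV hab))
        _ ≤ projMono sr zr V b := min_le_projMono sr zr V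
    · exact (projMono_le_of_not_le sr zr V ha).trans
        ((hV hab).trans (le_projMono_of_not_le sr zr V hb))

variable (V)

theorem sq_projMono_sub_le {y : ℝ} (hsr : sr ≤ s → zr ≤ y) (hrs : s ≤ sr → y ≤ zr) :
    (projMono sr zr V s - V s) ^ 2 ≤ (y - V s) ^ 2 := by
  unfold projMono
  split_ifs with hs hsr' hrs'
  · subst hs
    rw [le_antisymm (hrs le_rfl) (hsr le_rfl)]
  · exact sq_max_sub_le (hsr hsr')
  · exact sq_min_sub_le (hrs hrs')
  · rw [sub_self, sq, zero_mul]
    positivity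

end projMono

theorem projMono_mem_and_minimizes {S : Type} [Fintype S] [PartialOrder S]
    (V : S → ℝ) (hV : Monotone V) (sr : S) (zr : ℝ) :
    (projMono sr zr V sr = zr ∧ Monotone (projMono sr zr V)) ∧
      ∀ V' : S → ℝ, V' sr = zr → Monotone V' →
        ∑ s : S, (projMono sr zr V s - V s) ^ 2 ≤ ∑ s : S, (V' s - V s) ^ 2 := by
  refine ⟨⟨projMono_self sr zr V, projMono_monotone sr zr hV⟩, fun V' hV'sr hV' => ?_⟩
  exact Finset.sum_le_sum fun s _ =>
    sq_projMono_sub_le sr zr V (fun h => hV'sr ▸ hV' h) (fun h => hV'sr ▸ hV' h)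
end

section
/- Fix Vmax > 0 and define the bounding sequences U^0 = V* + Vmax·e, L^0 = V* − Vmax·e (where e is the all-ones value-function vector), and recursively U^{k+1} = (U^k + H U^k)/2 and L^{k+1} = (L^k + H L^k)/2. Then for every k ≥ 0, componentwise over all (t,s): H U^k ≤ U^{k+1} ≤ U^k and H L^k ≥ L^{k+1} ≥ L^k; moreover, for every t ∈ {0,…,T} and s ∈ S, U^k_t(s) → V*_t(s) and L^k_t(s) → V*_t(s) as k → ∞. -/
/-- The Bellman operator for a finite-horizon MDP: `(HV)_t(s) = max_a [C_t(s,a) +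
∑_{s'} p_t(s'|s,a) V_{t+1}(s')]` for `t < T` and `(HV)_T(s) = C_T(s)`. -/
noncomputable def bellman {S A : Type} [Fintype S] [Fintype A] [Nonempty A]
    (T : ℕ) (C : ℕ → S → A → ℝ) (CT : S → ℝ) (p : ℕ → S → A → S → ℝ)
    (V : ℕ → S → ℝ) : ℕ → S → ℝ :=
  fun t s =>
    if t < T then
      Finset.univ.sup' Finset.univ_nonempty
        (fun a => C t s a + ∑ s' : S, p t s a s' * V (t + 1) s')
    else CT s


/-- The bounding sequence `B^0 = V + c·e`, `B^{k+1} = (B^k + H B^k) / 2`.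
With `c = Vmax` this is the upper bounding sequence `U^k` started at `V* + Vmax·e`,
and with `c = -Vmax` it is the lower bounding sequence `L^k`. -/
noncomputable def boundSeq {S A : Type} [Fintype S] [Fintype A] [Nonempty A]
    (T : ℕ) (C : ℕ → S → A → ℝ) (CT : S → ℝ) (p : ℕ → S → A → S → ℝ)
    (V : ℕ → S → ℝ) (c : ℝ) : ℕ → ℕ → S → ℝ
  | 0 => fun t s => V t s + c
  | (k + 1) => fun t s =>
      (boundSeq T C CT p V c k t s + bellman T C CT p (boundSeq T C CT p V c k) t s) / 2

/-!
Adding a constant to `V_{t+1}` adds the same constant to `(HV)_t`, because the transition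
probabilities sum to one. Hence the bounding sequence started at `V* + c` keeps the form
`V*_t + c · β_k(T - t)`, and the averaging `B ↦ (B + HB) / 2` becomes Pascal's rule for
`β_k(m) = 2⁻ᵏ ∑_{j ≤ m} C(k, j)`, the probability that a fair-coin binomial variable with `k`
trials is at most `m`. This is antitone in `k` and tends to `0`; since `HB^k = 2B^{k+1} - B^k`,
monotonicity of `B^k` gives the sandwich.
-/

open Finset Filter Topology

noncomputable def halfBinomialCDF (k m : ℕ) : ℝ :=
  (∑ j ∈ range (m + 1), (k.choose j : ℝ)) / 2 ^ k

lemma halfBinomialCDF_zero_left (m : ℕ) : halfBinomialCDF 0 m = 1 := by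
  simp [halfBinomialCDF, sum_range_succ', Nat.choose_zero_succ]

lemma halfBinomialCDF_nonneg (k m : ℕ) : 0 ≤ halfBinomialCDF k m := by
  unfold halfBinomialCDF
  positivity

lemma monotone_halfBinomialCDF (k : ℕ) : Monotone (halfBinomialCDF k) := by
  refine monotone_nat_of_le_succ fun m => ?_
  unfold halfBinomialCDF
  gcongr
  omega

lemma halfBinomialCDF_succ_zero (k : ℕ) :
    halfBinomialCDF (k + 1) 0 = halfBinomialCDF k 0 / 2 := by
  simp [halfBinomialCDF, pow_succ]
  ring

lemma halfBinomialCDF_succ_succ (k m : ℕ) :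
    halfBinomialCDF (k + 1) (m + 1) = (halfBinomialCDF k (m + 1) + halfBinomialCDF k m) / 2 := by
  have pascal : ∑ j ∈ range (m + 2), ((k + 1).choose j : ℝ)
      = ∑ j ∈ range (m + 2), (k.choose j : ℝ) + ∑ j ∈ range (m + 1), (k.choose j : ℝ) := by
    rw [sum_range_succ' _ (m + 1), sum_range_succ' (fun j => (k.choose j : ℝ)) (m + 1)]
    simp only [Nat.choose_succ_succ, Nat.cast_add, Nat.choose_zero_right, sum_add_distrib]
    ring
  rw [halfBinomialCDF, halfBinomialCDF, halfBinomialCDF, pascal, pow_succ]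
  ring

lemma halfBinomialCDF_succ_le (k m : ℕ) : halfBinomialCDF (k + 1) m ≤ halfBinomialCDF k m := by
  cases m with
  | zero =>
    rw [halfBinomialCDF_succ_zero]
    linarith [halfBinomialCDF_nonneg k 0]
  | succ m =>
    rw [halfBinomialCDF_succ_succ]
    linarith [monotone_halfBinomialCDF k (Nat.le_succ m)]

lemma tendsto_halfBinomialCDF_atTop (m : ℕ) :
    Tendsto (fun k => halfBinomialCDF k m) atTop (𝓝 0) := by
  simp only [halfBinomialCDF, sum_div]
  rw [← sum_const_zero (s := range (m + 1))]
  refine tendsto_finsetSum _ fun j _ => ?_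
  -- `C(k, j) ≤ k ^ j`, and a polynomial is negligible against `2 ^ k`
  refine squeeze_zero (fun k => by positivity) (fun k => ?_)
    (tendsto_pow_const_div_const_pow_of_one_lt j (by norm_num : (1 : ℝ) < 2))
  gcongr
  exact_mod_cast Nat.choose_le_pow k j

section BoundSeq

variable {S A : Type} [Fintype S] [Fintype A] [Nonempty A] {T : ℕ} {C : ℕ → S → A → ℝ}
  {CT : S → ℝ} {p : ℕ → S → A → S → ℝ}

lemma bellman_eq_self_of_backward_induction {V : ℕ → S → ℝ} (hVT : ∀ s, V T s = CT s)
    (hVt : ∀ t < T, ∀ s, V t s =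
      univ.sup' univ_nonempty (fun a => C t s a + ∑ s' : S, p t s a s' * V (t + 1) s')) :
    ∀ t ≤ T, ∀ s, bellman T C CT p V t s = V t s := by
  intro t ht s
  unfold bellman
  split_ifs with hlt
  · exact (hVt t hlt s).symm
  · rw [show t = T by omega, hVT]

lemma bellman_terminal (V W : ℕ → S → ℝ) (s : S) :
    bellman T C CT p W T s = bellman T C CT p V T s := by
  simp [bellman]

lemma bellman_add_const {t : ℕ} (ht : t < T) (hp1 : ∀ s a, ∑ s' : S, p t s a s' = 1)
    {V W : ℕ → S → ℝ} {d : ℝ} (hW : ∀ s, W (t + 1) s = V (t + 1) s + d) (s : S) :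
    bellman T C CT p W t s = bellman T C CT p V t s + d := by
  have hsum : ∀ a, ∑ s', p t s a s' * W (t + 1) s' = ∑ s', p t s a s' * V (t + 1) s' + d := by
    intro a
    simp only [hW, mul_add, sum_add_distrib, ← sum_mul, hp1 s a, one_mul]
  simp only [bellman, if_pos ht, hsum, ← add_assoc]
  exact (sup'_add _ _ _ _).symm

lemma boundSeq_eq_add_halfBinomialCDF {V : ℕ → S → ℝ}
    (hp1 : ∀ t < T, ∀ s a, ∑ s' : S, p t s a s' = 1)
    (hfix : ∀ t ≤ T, ∀ s, bellman T C CT p V t s = V t s) (c : ℝ) (k : ℕ) :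
    ∀ t ≤ T, ∀ s, boundSeq T C CT p V c k t s = V t s + c * halfBinomialCDF k (T - t) := by
  induction k with
  | zero =>
    intro t _ s
    simp [boundSeq, halfBinomialCDF_zero_left]
  | succ k ih =>
    intro t ht s
    show (boundSeq T C CT p V c k t s + bellman T C CT p (boundSeq T C CT p V c k) t s) / 2 = _
    rcases ht.lt_or_eq with hlt | rfl
    · obtain ⟨m, hm⟩ : ∃ m, T - t = m + 1 := ⟨T - t - 1, by omega⟩
      have hnext : ∀ s, boundSeq T C CT p V c k (t + 1) s = V (t + 1) s + c * halfBinomialCDF k m :=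
        fun s => by rw [ih (t + 1) hlt s, show T - (t + 1) = m by omega]
      rw [bellman_add_const hlt (hp1 t hlt) hnext, hfix t ht, ih t ht, hm,
        halfBinomialCDF_succ_succ]
      ring
    · rw [bellman_terminal V, hfix t le_rfl, ih t le_rfl, Nat.sub_self, halfBinomialCDF_succ_zero]
      ring

lemma boundSeq_succ_le {V : ℕ → S → ℝ} (hp1 : ∀ t < T, ∀ s a, ∑ s' : S, p t s a s' = 1)
    (hfix : ∀ t ≤ T, ∀ s, bellman T C CT p V t s = V t s) {c : ℝ} (hc : 0 ≤ c) (k : ℕ)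
    {t : ℕ} (ht : t ≤ T) (s : S) :
    boundSeq T C CT p V c (k + 1) t s ≤ boundSeq T C CT p V c k t s := by
  rw [boundSeq_eq_add_halfBinomialCDF hp1 hfix c _ t ht,
    boundSeq_eq_add_halfBinomialCDF hp1 hfix c _ t ht]
  gcongr
  exact halfBinomialCDF_succ_le k (T - t)

lemma boundSeq_le_succ {V : ℕ → S → ℝ} (hp1 : ∀ t < T, ∀ s a, ∑ s' : S, p t s a s' = 1)
    (hfix : ∀ t ≤ T, ∀ s, bellman T C CT p V t s = V t s) {c : ℝ} (hc : c ≤ 0) (k : ℕ)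
    {t : ℕ} (ht : t ≤ T) (s : S) :
    boundSeq T C CT p V c k t s ≤ boundSeq T C CT p V c (k + 1) t s := by
  rw [boundSeq_eq_add_halfBinomialCDF hp1 hfix c _ t ht,
    boundSeq_eq_add_halfBinomialCDF hp1 hfix c _ t ht]
  linarith [mul_le_mul_of_nonpos_left (halfBinomialCDF_succ_le k (T - t)) hc]

lemma tendsto_boundSeq {V : ℕ → S → ℝ} (hp1 : ∀ t < T, ∀ s a, ∑ s' : S, p t s a s' = 1)
    (hfix : ∀ t ≤ T, ∀ s, bellman T C CT p V t s = V t s) (c : ℝ) {t : ℕ} (ht : t ≤ T)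
    (s : S) : Tendsto (fun k => boundSeq T C CT p V c k t s) atTop (𝓝 (V t s)) := by
  have h := ((tendsto_halfBinomialCDF_atTop (T - t)).const_mul c).const_add (V t s)
  rw [mul_zero, add_zero] at h
  exact h.congr fun k => (boundSeq_eq_add_halfBinomialCDF hp1 hfix c k t ht s).symm

end BoundSeq

theorem boundSeq_sandwich_and_tendsto_general {S A : Type} [Fintype S]
    [Fintype A] [Nonempty A]
    (T : ℕ)
    (C : ℕ → S → A → ℝ) (CT : S → ℝ) (p : ℕ → S → A → S → ℝ)
    (hp1 : ∀ t, t < T → ∀ (s : S) (a : A), ∑ s' : S, p t s a s' = 1)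
    (Vstar : ℕ → S → ℝ)
    (hVT : ∀ s : S, Vstar T s = CT s)
    (hVt : ∀ t, t < T → ∀ s : S, Vstar t s =
      Finset.univ.sup' Finset.univ_nonempty
        (fun a => C t s a + ∑ s' : S, p t s a s' * Vstar (t + 1) s'))
    (Vmax : ℝ) (hVmax : 0 < Vmax) :
    (∀ k : ℕ, ∀ t ≤ T, ∀ s : S,
      bellman T C CT p (boundSeq T C CT p Vstar Vmax k) t s ≤
          boundSeq T C CT p Vstar Vmax (k + 1) t s ∧
        boundSeq T C CT p Vstar Vmax (k + 1) t s ≤ boundSeq T C CT p Vstar Vmax k t s) ∧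
    (∀ k : ℕ, ∀ t ≤ T, ∀ s : S,
      boundSeq T C CT p Vstar (-Vmax) (k + 1) t s ≤
          bellman T C CT p (boundSeq T C CT p Vstar (-Vmax) k) t s ∧
        boundSeq T C CT p Vstar (-Vmax) k t s ≤ boundSeq T C CT p Vstar (-Vmax) (k + 1) t s) ∧
    (∀ t ≤ T, ∀ s : S,
      Filter.Tendsto (fun k => boundSeq T C CT p Vstar Vmax k t s) Filter.atTop
          (nhds (Vstar t s)) ∧
        Filter.Tendsto (fun k => boundSeq T C CT p Vstar (-Vmax) k t s) Filter.atTop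
          (nhds (Vstar t s))) := by
  have hfix := bellman_eq_self_of_backward_induction hVT hVt
  refine ⟨fun k t ht s => ?_, fun k t ht s => ?_, fun t ht s =>
    ⟨tendsto_boundSeq hp1 hfix _ ht s, tendsto_boundSeq hp1 hfix _ ht s⟩⟩
  · have hdec := boundSeq_succ_le hp1 hfix hVmax.le k ht s
    simp only [boundSeq] at hdec ⊢
    exact ⟨by linarith, hdec⟩
  · have hinc := boundSeq_le_succ hp1 hfix (neg_nonpos.2 hVmax.le) k ht s
    simp only [boundSeq] at hinc ⊢
    exact ⟨by linarith, hinc⟩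

theorem boundSeq_sandwich_and_tendsto {S A : Type} [Fintype S] [Nonempty S]
    [Fintype A] [Nonempty A]
    (T : ℕ) (hT : 1 ≤ T)
    (C : ℕ → S → A → ℝ) (CT : S → ℝ) (p : ℕ → S → A → S → ℝ)
    (hp0 : ∀ t, t < T → ∀ (s : S) (a : A) (s' : S), 0 ≤ p t s a s')
    (hp1 : ∀ t, t < T → ∀ (s : S) (a : A), ∑ s' : S, p t s a s' = 1)
    (Vstar : ℕ → S → ℝ)
    (hVT : ∀ s : S, Vstar T s = CT s)
    (hVt : ∀ t, t < T → ∀ s : S, Vstar t s =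
      Finset.univ.sup' Finset.univ_nonempty
        (fun a => C t s a + ∑ s' : S, p t s a s' * Vstar (t + 1) s'))
    (Vmax : ℝ) (hVmax : 0 < Vmax) :
    (∀ k : ℕ, ∀ t ≤ T, ∀ s : S,
      bellman T C CT p (boundSeq T C CT p Vstar Vmax k) t s ≤
          boundSeq T C CT p Vstar Vmax (k + 1) t s ∧
        boundSeq T C CT p Vstar Vmax (k + 1) t s ≤ boundSeq T C CT p Vstar Vmax k t s) ∧
    (∀ k : ℕ, ∀ t ≤ T, ∀ s : S,
      boundSeq T C CT p Vstar (-Vmax) (k + 1) t s ≤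
          bellman T C CT p (boundSeq T C CT p Vstar (-Vmax) k) t s ∧
        boundSeq T C CT p Vstar (-Vmax) k t s ≤ boundSeq T C CT p Vstar (-Vmax) (k + 1) t s) ∧
    (∀ t ≤ T, ∀ s : S,
      Filter.Tendsto (fun k => boundSeq T C CT p Vstar Vmax k t s) Filter.atTop
          (nhds (Vstar t s)) ∧
        Filter.Tendsto (fun k => boundSeq T C CT p Vstar (-Vmax) k t s) Filter.atTop
          (nhds (Vstar t s))) :=
  boundSeq_sandwich_and_tendsto_general T C CT p hp1 Vstar hVT hVt Vmax hVmax
end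

section
/- Suppose S carries a partial order ⪯ such that: (i) the terminal contribution C_T is monotone over S, and (ii) for every t < T and every value-function vector V such that V_{t+1} is monotone over S, the function (HV)_t is monotone over S. Fix Vmax > 0 and define U^0 = V* + Vmax·e, L^0 = V* − Vmax·e, U^{k+1} = (U^k + H U^k)/2 and L^{k+1} = (L^k + H L^k)/2. Then for every k ≥ 0, every t ∈ {0,…,T}, and every pair of states s ⪯ s': U^k_t(s) ≤ U^k_t(s') and L^k_t(s) ≤ L^k_t(s'). -/
/-!
The Bellman operator preserves monotonicity at every stage `t ≤ T`: below the horizon by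
assumption, at the horizon because `(HV)_T = C_T`. Since `V* = HV*` on `0, …, T`, backward
induction on `t` makes `V*` monotone, hence also `U^0` and `L^0`. Each `U^{k+1}`, `L^{k+1}` is an
average of two monotone functions, so induction on `k` finishes the proof.
-/

section Monotonicity

variable {S A : Type} [Fintype S] [Fintype A] [Nonempty A]
  {T : ℕ} {C : ℕ → S → A → ℝ} {CT : S → ℝ} {p : ℕ → S → A → S → ℝ}

theorem bellman_of_lt {V : ℕ → S → ℝ} {t : ℕ} (ht : t < T) (s : S) :
    bellman T C CT p V t s =
      Finset.univ.sup' Finset.univ_nonempty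
        (fun a => C t s a + ∑ s' : S, p t s a s' * V (t + 1) s') :=
  if_pos ht

theorem bellman_horizon (V : ℕ → S → ℝ) : bellman T C CT p V T = CT :=
  funext fun _ => if_neg (lt_irrefl T)

theorem monotone_bellman [PartialOrder S] (hCT : Monotone CT)
    (hH : ∀ t, t < T → ∀ V : ℕ → S → ℝ, Monotone (V (t + 1)) →
      Monotone (fun s => bellman T C CT p V t s))
    {V : ℕ → S → ℝ} {t : ℕ} (ht : t ≤ T) (hV : t < T → Monotone (V (t + 1))) :
    Monotone (bellman T C CT p V t) := by
  rcases ht.lt_or_eq with hlt | rfl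
  · exact hH t hlt V (hV hlt)
  · rwa [bellman_horizon]

theorem monotone_of_eq_bellman [PartialOrder S] (hCT : Monotone CT)
    (hH : ∀ t, t < T → ∀ V : ℕ → S → ℝ, Monotone (V (t + 1)) →
      Monotone (fun s => bellman T C CT p V t s))
    {V : ℕ → S → ℝ} (hfix : ∀ t ≤ T, V t = bellman T C CT p V t) :
    ∀ t ≤ T, Monotone (V t) := by
  intro t ht
  induction ht using Nat.decreasingInduction with
  | self => rw [hfix T le_rfl]; exact monotone_bellman hCT hH le_rfl (absurd · (lt_irrefl T))
  | of_succ t hlt ih => rw [hfix t hlt.le]; exact monotone_bellman hCT hH hlt.le fun _ => ih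

theorem monotone_boundSeq [PartialOrder S] (hCT : Monotone CT)
    (hH : ∀ t, t < T → ∀ V : ℕ → S → ℝ, Monotone (V (t + 1)) →
      Monotone (fun s => bellman T C CT p V t s))
    {V : ℕ → S → ℝ} (hV : ∀ t ≤ T, Monotone (V t)) (c : ℝ) (k : ℕ) :
    ∀ t ≤ T, Monotone (boundSeq T C CT p V c k t) := by
  induction k with
  | zero => exact fun t ht => (hV t ht).add_const c
  | succ k ih =>
    intro t ht
    have hHB := monotone_bellman hCT hH ht fun hlt => ih (t + 1) hlt
    exact ((ih t ht).add hHB).div_const zero_le_two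

end Monotonicity

theorem boundSeq_monotone_general {S A : Type} [Fintype S] [PartialOrder S]
    [Fintype A] [Nonempty A]
    (T : ℕ)
    (C : ℕ → S → A → ℝ) (CT : S → ℝ) (p : ℕ → S → A → S → ℝ)
    (hCT : Monotone CT)
    (hH : ∀ t, t < T → ∀ V : ℕ → S → ℝ, Monotone (V (t + 1)) →
      Monotone (fun s => bellman T C CT p V t s))
    (Vstar : ℕ → S → ℝ)
    (hVT : ∀ s : S, Vstar T s = CT s)
    (hVt : ∀ t, t < T → ∀ s : S, Vstar t s =
      Finset.univ.sup' Finset.univ_nonempty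
        (fun a => C t s a + ∑ s' : S, p t s a s' * Vstar (t + 1) s'))
    (Vmax : ℝ) :
    ∀ k : ℕ, ∀ t ≤ T, ∀ s s' : S, s ≤ s' →
      boundSeq T C CT p Vstar Vmax k t s ≤ boundSeq T C CT p Vstar Vmax k t s' ∧
        boundSeq T C CT p Vstar (-Vmax) k t s ≤ boundSeq T C CT p Vstar (-Vmax) k t s' := by
  have hfix : ∀ t ≤ T, Vstar t = bellman T C CT p Vstar t := by
    intro t ht
    rcases ht.lt_or_eq with hlt | rfl
    · exact funext fun s => (hVt t hlt s).trans (bellman_of_lt hlt s).symm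
    · exact (funext hVT).trans (bellman_horizon Vstar).symm
  have hVstar := monotone_of_eq_bellman hCT hH hfix
  intro k t ht s s' hss
  exact ⟨monotone_boundSeq hCT hH hVstar Vmax k t ht hss,
    monotone_boundSeq hCT hH hVstar (-Vmax) k t ht hss⟩

theorem boundSeq_monotone {S A : Type} [Fintype S] [Nonempty S] [PartialOrder S]
    [Fintype A] [Nonempty A]
    (T : ℕ) (hT : 1 ≤ T)
    (C : ℕ → S → A → ℝ) (CT : S → ℝ) (p : ℕ → S → A → S → ℝ)
    (hp0 : ∀ t, t < T → ∀ (s : S) (a : A) (s' : S), 0 ≤ p t s a s')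
    (hp1 : ∀ t, t < T → ∀ (s : S) (a : A), ∑ s' : S, p t s a s' = 1)
    (hCT : Monotone CT)
    (hH : ∀ t, t < T → ∀ V : ℕ → S → ℝ, Monotone (V (t + 1)) →
      Monotone (fun s => bellman T C CT p V t s))
    (Vstar : ℕ → S → ℝ)
    (hVT : ∀ s : S, Vstar T s = CT s)
    (hVt : ∀ t, t < T → ∀ s : S, Vstar t s =
      Finset.univ.sup' Finset.univ_nonempty
        (fun a => C t s a + ∑ s' : S, p t s a s' * Vstar (t + 1) s'))
    (Vmax : ℝ) (hVmax : 0 < Vmax) :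
    ∀ k : ℕ, ∀ t ≤ T, ∀ s s' : S, s ≤ s' →
      boundSeq T C CT p Vstar Vmax k t s ≤ boundSeq T C CT p Vstar Vmax k t s' ∧
        boundSeq T C CT p Vstar (-Vmax) k t s ≤ boundSeq T C CT p Vstar (-Vmax) k t s' :=
  boundSeq_monotone_general T C CT p hCT hH Vstar hVT hVt Vmax
end

section
/- Let (Ω, ℱ, P) be a probability space with a filtration (ℱ^n)_{n≥0}. Let (α^n)_{n≥0} be random variables with α^n ∈ [0,1], each α^n measurable with respect to ℱ^n, satisfying ∑_{n=0}^∞ α^n = ∞ almost surely and ∑_{n=0}^∞ (α^n)² < ∞ almost surely. Let (w^{n+1})_{n≥0} be random variables such that each w^{n+1} is ℱ^{n+1}-measurable, |w^{n+1}| ≤ K almost surely for a constant K > 0, and E[w^{n+1} | ℱ^n] = 0 almost surely. Define the positive incurred noise sequence by W^0 = 0 and W^{n+1} = max(0, (1 − α^n) W^n + α^n w^{n+1}). Then W^n → 0 almost surely as n → ∞. -/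
/-!
The noise sum `M n = ∑_{k<n} α k * w (k+1)` is a martingale transform whose increments have
conditional variance at most `K² (α k)²`. Zeroing `α` from the first index where `∑ α²` exceeds
`C` gives an L²-bounded martingale, so `M` converges a.s. on `{∑ α² < ∞}`. Pathwise, with
`T n = M n - lim M`, the shifted process `W - T` obeys
`W (n+1) - T (n+1) ≤ max ε ((1 - α n) (W n - T n) + α n ε)` once `|T| ≤ ε`, and `∑ α = ∞`
makes its excess over `ε` decay like `exp (-∑ α)`.
-/

open MeasureTheory Filter Finset Topology

lemma tendsto_zero_of_le_one_sub_mul {a z : ℕ → ℝ} (hz : ∀ n, 0 ≤ z n)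
    (ha : Tendsto (fun N => ∑ n ∈ range N, a n) atTop atTop)
    (hrec : ∀ᶠ n in atTop, z (n + 1) ≤ (1 - a n) * z n) :
    Tendsto z atTop (𝓝 0) := by
  obtain ⟨m, hm⟩ := eventually_atTop.1 hrec
  -- `1 - a ≤ exp (-a)` makes `z n * exp (∑_{k<n} a k)` antitone from `m` on.
  have hanti : ∀ n ≥ m, z n * Real.exp (∑ k ∈ range n, a k) ≤
      z m * Real.exp (∑ k ∈ range m, a k) := by
    intro n hn
    induction n, hn using Nat.le_induction with
    | base => rfl
    | succ n hmn ih =>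
      have hstep : z (n + 1) ≤ Real.exp (-a n) * z n :=
        (hm n hmn).trans (mul_le_mul_of_nonneg_right
          (by linarith [Real.add_one_le_exp (-a n)]) (hz n))
      calc z (n + 1) * Real.exp (∑ k ∈ range (n + 1), a k)
          ≤ Real.exp (-a n) * z n * Real.exp (∑ k ∈ range (n + 1), a k) := by gcongr
        _ = z n * Real.exp (∑ k ∈ range n, a k) := by
          rw [sum_range_succ, Real.exp_add, Real.exp_neg]
          field_simp
        _ ≤ _ := ih
  have hexp : Tendsto (fun n => z m * Real.exp (∑ k ∈ range m, a k) *
      Real.exp (-∑ k ∈ range n, a k)) atTop (𝓝 0) := by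
    simpa using (Real.tendsto_exp_atBot.comp (tendsto_neg_atTop_atBot.comp ha)).const_mul
      (z m * Real.exp (∑ k ∈ range m, a k))
  refine squeeze_zero' (Eventually.of_forall hz) ?_ hexp
  filter_upwards [eventually_ge_atTop m] with n hn
  rw [Real.exp_neg, ← div_eq_mul_inv, le_div_iff₀ (Real.exp_pos _)]
  exact hanti n hn

lemma eventually_le_of_le_max_one_sub_mul {a y : ℕ → ℝ} (ha : ∀ n, a n ≤ 1)
    (hsum : Tendsto (fun N => ∑ n ∈ range N, a n) atTop atTop)
    (hrec : ∀ ε > 0, ∀ᶠ n in atTop, y (n + 1) ≤ max ε ((1 - a n) * y n + a n * ε)) :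
    ∀ ε > 0, ∀ᶠ n in atTop, y n ≤ ε := by
  intro ε hε
  -- The excess of `y` over `ε / 2` contracts by the factor `1 - a n`.
  set z : ℕ → ℝ := fun n => max (y n - ε / 2) 0
  have hz : Tendsto z atTop (𝓝 0) := by
    refine tendsto_zero_of_le_one_sub_mul (fun n => le_max_right _ _) hsum ?_
    filter_upwards [hrec (ε / 2) (half_pos hε)] with n hn
    have hzn : 0 ≤ (1 - a n) * z n := mul_nonneg (by linarith [ha n]) (le_max_right _ _)
    refine max_le ?_ hzn
    rcases le_max_iff.1 hn with h | h
    · linarith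
    · nlinarith [mul_le_mul_of_nonneg_left (le_max_left (y n - ε / 2) 0)
        (sub_nonneg.2 (ha n))]
  filter_upwards [hz.eventually (gt_mem_nhds (half_pos hε))] with n hn
  linarith [le_max_left (y n - ε / 2) 0]

theorem tendsto_zero_of_tendsto_sum_mul {a v W : ℕ → ℝ} {L : ℝ} (ha0 : ∀ n, 0 ≤ a n)
    (ha1 : ∀ n, a n ≤ 1) (hsum : Tendsto (fun N => ∑ n ∈ range N, a n) atTop atTop)
    (hM : Tendsto (fun N => ∑ n ∈ range N, a n * v n) atTop (𝓝 L))
    (hW : ∀ n, W (n + 1) = max 0 ((1 - a n) * W n + a n * v n)) :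
    Tendsto W atTop (𝓝 0) := by
  -- `T n` is minus the tail `∑_{k ≥ n} a k * v k`; `W - T` is then a damped recursion.
  set T : ℕ → ℝ := fun n => ∑ k ∈ range n, a k * v k - L
  have hT : Tendsto T atTop (𝓝 0) := by simpa using hM.sub_const L
  have hTsucc : ∀ n, T (n + 1) = T n + a n * v n := fun n => by
    simp only [T, sum_range_succ]; ring
  have hD : ∀ ε > 0, ∀ᶠ n in atTop, W n - T n ≤ ε := by
    refine eventually_le_of_le_max_one_sub_mul ha1 hsum fun ε hε => ?_
    have hsmall : ∀ᶠ n in atTop, |T n| ≤ ε :=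
      hT.eventually (Metric.closedBall_mem_nhds 0 hε) |>.mono fun n hn => by
        simpa [Real.dist_eq] using hn
    filter_upwards [hsmall, (tendsto_add_atTop_nat 1).eventually hsmall] with n hn hn1
    rw [hW, ← max_sub_sub_right]
    refine max_le_max (by linarith [neg_abs_le (T (n + 1))]) ?_
    rw [hTsucc]
    nlinarith [ha0 n, neg_abs_le (T n)]
  refine tendsto_order.2 ⟨fun b hb => ?_, fun b hb => ?_⟩
  · filter_upwards [eventually_ge_atTop 1] with n hn
    obtain ⟨k, rfl⟩ := Nat.exists_eq_add_of_le' hn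
    exact hb.trans_le (hW k ▸ le_max_left _ _)
  · filter_upwards [hD (b / 2) (half_pos hb), hT.eventually (gt_mem_nhds (half_pos hb))]
      with n hD hT
    linarith

noncomputable def truncateBySqSum (C : ℝ) (x : ℕ → ℝ) (k : ℕ) : ℝ :=
  if ∑ j ∈ range (k + 1), x j ^ 2 ≤ C then x k else 0

lemma sum_sq_truncateBySqSum_le {C : ℝ} (hC : 0 ≤ C) (x : ℕ → ℝ) (n : ℕ) :
    ∑ k ∈ range n, truncateBySqSum C x k ^ 2 ≤ C := by
  suffices h : ∑ k ∈ range n, truncateBySqSum C x k ^ 2 ≤ min (∑ k ∈ range n, x k ^ 2) C from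
    h.trans (min_le_right _ _)
  induction n with
  | zero => simpa using hC
  | succ n ih =>
    rw [sum_range_succ, truncateBySqSum]
    split_ifs with h
    · have hle : ∑ k ∈ range n, truncateBySqSum C x k ^ 2 + x n ^ 2 ≤
          ∑ k ∈ range (n + 1), x k ^ 2 := by
        rw [sum_range_succ]
        linarith [ih.trans (min_le_left _ _)]
      exact le_min hle (hle.trans h)
    · rw [zero_pow two_ne_zero, add_zero]
      exact ih.trans (min_le_min_right _ (sum_le_sum_of_subset_of_nonneg
        (range_subset_range.2 n.le_succ) fun j _ _ => sq_nonneg (x j)))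

lemma truncateBySqSum_eq_self {C : ℝ} {x : ℕ → ℝ} (hx : Summable fun n => x n ^ 2)
    (hC : ∑' n, x n ^ 2 ≤ C) : truncateBySqSum C x = x :=
  funext fun _ => if_pos ((hx.sum_le_tsum _ fun j _ => sq_nonneg (x j)).trans hC)

namespace MeasureTheory

variable {Ω : Type*} {m0 : MeasurableSpace Ω} {μ : Measure Ω}

lemma integral_mul_eq_zero_of_condExp_eq_zero {m : MeasurableSpace Ω} (hm : m ≤ m0)
    [SigmaFinite (μ.trim hm)] {X Y : Ω → ℝ} (hX : StronglyMeasurable[m] X)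
    (hXY : Integrable (X * Y) μ) (hY : Integrable Y μ) (hY0 : μ[Y | m] =ᵐ[μ] 0) :
    ∫ ω, X ω * Y ω ∂μ = 0 := by
  calc ∫ ω, X ω * Y ω ∂μ = ∫ ω, μ[X * Y | m] ω ∂μ := (integral_condExp hm).symm
    _ = ∫ ω, (X * μ[Y | m]) ω ∂μ :=
      integral_congr_ae (condExp_mul_of_stronglyMeasurable_left hX hXY hY)
    _ = 0 := by
      rw [integral_congr_ae (hY0.mono fun ω h => by simp [h] : X * μ[Y | m] =ᵐ[μ] 0)]
      simp

variable {ℱ : Filtration ℕ m0}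

lemma Martingale.integral_sq_succ [IsFiniteMeasure μ] {f : ℕ → Ω → ℝ} (hf : Martingale f ℱ μ)
    (hf2 : ∀ n, MemLp (f n) 2 μ) (n : ℕ) :
    ∫ ω, f (n + 1) ω ^ 2 ∂μ = ∫ ω, f n ω ^ 2 ∂μ + ∫ ω, (f (n + 1) ω - f n ω) ^ 2 ∂μ := by
  have hd2 : MemLp (f (n + 1) - f n) 2 μ := (hf2 (n + 1)).sub (hf2 n)
  have hcross : Integrable (fun ω => 2 * (f n ω * (f (n + 1) ω - f n ω))) μ :=
    ((hf2 n).integrable_mul hd2).const_mul 2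
  have hd2sq : Integrable (fun ω => (f (n + 1) ω - f n ω) ^ 2) μ := hd2.integrable_sq
  have horth : ∫ ω, f n ω * (f (n + 1) ω - f n ω) ∂μ = 0 := by
    refine integral_mul_eq_zero_of_condExp_eq_zero (ℱ.le n) (hf.stronglyMeasurable n)
      ((hf2 n).integrable_mul hd2) ((hf.integrable _).sub (hf.integrable _)) ?_
    filter_upwards [condExp_sub (hf.integrable (n + 1)) (hf.integrable n) (ℱ n),
      hf.condExp_ae_eq n.le_succ, hf.condExp_ae_eq (le_refl n)] with ω h1 h2 h3
    rw [Pi.sub_apply, h2, h3, sub_self] at h1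
    exact h1
  have hsq : (fun ω => f (n + 1) ω ^ 2) = fun ω =>
      f n ω ^ 2 + (2 * (f n ω * (f (n + 1) ω - f n ω)) + (f (n + 1) ω - f n ω) ^ 2) := by
    ext ω; ring
  rw [hsq, integral_add (hf2 n).integrable_sq, integral_add hcross hd2sq, integral_const_mul,
    horth, mul_zero, zero_add]
  exact hcross.add hd2sq

lemma Martingale.integral_sq_eq_add_sum [IsFiniteMeasure μ] {f : ℕ → Ω → ℝ}
    (hf : Martingale f ℱ μ) (hf2 : ∀ n, MemLp (f n) 2 μ) (n : ℕ) :
    ∫ ω, f n ω ^ 2 ∂μ =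
      ∫ ω, f 0 ω ^ 2 ∂μ + ∑ k ∈ range n, ∫ ω, (f (k + 1) ω - f k ω) ^ 2 ∂μ := by
  induction n with
  | zero => simp
  | succ n ih => rw [hf.integral_sq_succ hf2, ih, sum_range_succ, add_assoc]

lemma Martingale.exists_ae_tendsto_of_integral_sq_le [IsFiniteMeasure μ] {f : ℕ → Ω → ℝ}
    (hf : Martingale f ℱ μ) (hf2 : ∀ n, MemLp (f n) 2 μ) {R : ℝ}
    (hR : ∀ n, ∫ ω, f n ω ^ 2 ∂μ ≤ R) :
    ∀ᵐ ω ∂μ, ∃ c, Tendsto (fun n => f n ω) atTop (𝓝 c) := by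
  refine hf.submartingale.exists_ae_tendsto_of_bdd (R := (μ.real Set.univ + R).toNNReal)
    fun n => ?_
  rw [eLpNorm_one_eq_lintegral_enorm, ← ofReal_integral_norm_eq_lintegral_enorm (hf.integrable n)]
  refine ENNReal.ofReal_le_ofReal ?_
  calc ∫ ω, ‖f n ω‖ ∂μ ≤ ∫ ω, (1 + f n ω ^ 2) ∂μ := by
        refine integral_mono (hf.integrable n).norm
          ((integrable_const 1).add (hf2 n).integrable_sq) fun ω => ?_
        rw [Real.norm_eq_abs]
        nlinarith [sq_abs (f n ω), sq_nonneg (|f n ω| - 1)]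
    _ = μ.real Set.univ + ∫ ω, f n ω ^ 2 ∂μ := by
        rw [integral_add (integrable_const 1) (hf2 n).integrable_sq]
        simp
    _ ≤ μ.real Set.univ + R := by linarith [hR n]

lemma martingale_sum_mul_of_condExp_eq_zero [IsFiniteMeasure μ] {β w : ℕ → Ω → ℝ}
    (hβ : ∀ n, Measurable[ℱ n] (β n)) (hw : ∀ n, Measurable[ℱ (n + 1)] (w (n + 1)))
    (hwint : ∀ n, Integrable (w (n + 1)) μ) (hβw : ∀ n, Integrable (β n * w (n + 1)) μ)
    (hw0 : ∀ n, μ[w (n + 1) | ℱ n] =ᵐ[μ] 0) :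
    Martingale (fun n ω => ∑ k ∈ range n, β k ω * w (k + 1) ω) ℱ μ := by
  have hincr : ∀ n, (fun ω => ∑ k ∈ range (n + 1), β k ω * w (k + 1) ω) -
      (fun ω => ∑ k ∈ range n, β k ω * w (k + 1) ω) = β n * w (n + 1) := fun n => by
    ext ω; simp [sum_range_succ]
  refine martingale_of_condExp_sub_eq_zero_nat (fun n => ?_)
    (fun n => integrable_finsetSum _ fun k _ => hβw k) fun n => ?_
  · refine Measurable.stronglyMeasurable (Finset.measurable_sum _ fun k hk => ?_)
    have hkn := mem_range.1 hk
    exact ((hβ k).mono (ℱ.mono hkn.le) le_rfl).mul ((hw k).mono (ℱ.mono hkn) le_rfl)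
  · rw [hincr]
    filter_upwards [condExp_mul_of_stronglyMeasurable_left (hβ n).stronglyMeasurable (hβw n)
      (hwint n), hw0 n] with ω h1 h2
    simp [h1, h2]

lemma ae_exists_tendsto_sum_mul_of_sum_sq_le [IsFiniteMeasure μ] {β w : ℕ → Ω → ℝ} {C K : ℝ}
    (hβ : ∀ n, Measurable[ℱ n] (β n)) (hβC : ∀ n ω, ∑ k ∈ range n, β k ω ^ 2 ≤ C)
    (hw : ∀ n, Measurable[ℱ (n + 1)] (w (n + 1))) (hwK : ∀ n, ∀ᵐ ω ∂μ, |w (n + 1) ω| ≤ K)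
    (hw0 : ∀ n, μ[w (n + 1) | ℱ n] =ᵐ[μ] 0) :
    ∀ᵐ ω ∂μ, ∃ c, Tendsto (fun n => ∑ k ∈ range n, β k ω * w (k + 1) ω) atTop (𝓝 c) := by
  have hβ_le : ∀ k ω, |β k ω| ≤ √C := fun k ω => Real.abs_le_sqrt <|
    (single_le_sum (fun j _ => sq_nonneg (β j ω)) (self_mem_range_succ k)).trans (hβC (k + 1) ω)
  have hw_meas : ∀ n, Measurable (w (n + 1)) := fun n => (hw n).mono (ℱ.le _) le_rfl
  have hw2 : ∀ n, MemLp (w (n + 1)) 2 μ := fun n =>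
    .of_bound (hw_meas n).aestronglyMeasurable K (by simpa using hwK n)
  have hβw2 : ∀ n, MemLp (β n * w (n + 1)) 2 μ := fun n => by
    refine .of_bound (((hβ n).mono (ℱ.le _) le_rfl).mul (hw_meas n)).aestronglyMeasurable
      (√C * K) ?_
    filter_upwards [hwK n] with ω hω
    rw [Pi.mul_apply, norm_mul, Real.norm_eq_abs, Real.norm_eq_abs]
    exact mul_le_mul (hβ_le n ω) hω (abs_nonneg _) (Real.sqrt_nonneg C)
  have hmart := martingale_sum_mul_of_condExp_eq_zero hβ hw
    (fun n => (hw2 n).integrable one_le_two) (fun n => (hβw2 n).integrable one_le_two) hw0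
  refine hmart.exists_ae_tendsto_of_integral_sq_le (R := μ.real Set.univ * (K ^ 2 * C))
    (fun n => memLp_finsetSum _ fun k _ => hβw2 k) fun n => ?_
  simp only [hmart.integral_sq_eq_add_sum (fun n => memLp_finsetSum _ fun k _ => hβw2 k) n,
    range_zero, sum_empty, sum_range_succ, add_sub_cancel_left, zero_pow two_ne_zero,
    integral_zero, zero_add]
  have hsq : ∀ k, Integrable (fun ω => (β k ω * w (k + 1) ω) ^ 2) μ := fun k =>
    (hβw2 k).integrable_sq
  rw [← integral_finsetSum _ fun k _ => hsq k]
  calc ∫ ω, ∑ k ∈ range n, (β k ω * w (k + 1) ω) ^ 2 ∂μ ≤ ∫ _, K ^ 2 * C ∂μ := by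
        refine integral_mono_ae (integrable_finsetSum _ fun k _ => hsq k)
          (integrable_const _) ?_
        filter_upwards [ae_all_iff.2 hwK] with ω hω
        calc ∑ k ∈ range n, (β k ω * w (k + 1) ω) ^ 2
            ≤ ∑ k ∈ range n, K ^ 2 * β k ω ^ 2 := sum_le_sum fun k _ => by
              rw [mul_pow, mul_comm]
              exact mul_le_mul_of_nonneg_right
                (sq_le_sq' (neg_le_of_abs_le (hω k)) (le_of_abs_le (hω k))) (sq_nonneg _)
          _ ≤ K ^ 2 * C := by rw [← mul_sum]; gcongr; exact hβC n ω
    _ = μ.real Set.univ * (K ^ 2 * C) := by simp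

theorem ae_exists_tendsto_sum_mul_of_summable_sq [IsFiniteMeasure μ] {α w : ℕ → Ω → ℝ} {K : ℝ}
    (hα : ∀ n, Measurable[ℱ n] (α n)) (hw : ∀ n, Measurable[ℱ (n + 1)] (w (n + 1)))
    (hwK : ∀ n, ∀ᵐ ω ∂μ, |w (n + 1) ω| ≤ K) (hw0 : ∀ n, μ[w (n + 1) | ℱ n] =ᵐ[μ] 0) :
    ∀ᵐ ω ∂μ, (Summable fun n => α n ω ^ 2) →
      ∃ c, Tendsto (fun n => ∑ k ∈ range n, α k ω * w (k + 1) ω) atTop (𝓝 c) := by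
  have htrunc : ∀ C : ℕ, ∀ᵐ ω ∂μ, ∃ c, Tendsto
      (fun n => ∑ k ∈ range n, truncateBySqSum C (α · ω) k * w (k + 1) ω) atTop (𝓝 c) := by
    intro C
    refine ae_exists_tendsto_sum_mul_of_sum_sq_le (fun k => ?_)
      (fun n ω => sum_sq_truncateBySqSum_le C.cast_nonneg _ n) hw hwK hw0
    refine Measurable.ite (measurableSet_le (Finset.measurable_sum _ fun j hj => ?_)
      measurable_const) (hα k) measurable_const
    exact ((hα j).mono (ℱ.mono (Nat.lt_succ_iff.1 (mem_range.1 hj))) le_rfl).pow_const 2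
  filter_upwards [ae_all_iff.2 htrunc] with ω hω hsum
  obtain ⟨c, hc⟩ := hω ⌈∑' n, α n ω ^ 2⌉₊
  rw [truncateBySqSum_eq_self hsum (Nat.le_ceil _)] at hc
  exact ⟨c, hc⟩

end MeasureTheory

theorem positive_incurred_noise_tendsto_zero_general
    {Ω : Type} {m0 : MeasurableSpace Ω} (μ : Measure Ω) [IsProbabilityMeasure μ]
    (ℱ : Filtration ℕ m0)
    (α : ℕ → Ω → ℝ)
    (hα01 : ∀ n ω, α n ω ∈ Set.Icc (0 : ℝ) 1)
    (hαmeas : ∀ n, Measurable[ℱ n] (α n))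
    (hαdiv : ∀ᵐ ω ∂μ, Tendsto (fun N => ∑ n ∈ Finset.range N, α n ω) atTop atTop)
    (hαsq : ∀ᵐ ω ∂μ, Summable fun n => (α n ω) ^ 2)
    (w : ℕ → Ω → ℝ) (K : ℝ)
    (hwmeas : ∀ n, Measurable[ℱ (n + 1)] (w (n + 1)))
    (hwbd : ∀ n, ∀ᵐ ω ∂μ, |w (n + 1) ω| ≤ K)
    (hwzero : ∀ n, μ[w (n + 1) | ℱ n] =ᵐ[μ] 0)
    (W : ℕ → Ω → ℝ)
    (hWrec : ∀ n ω, W (n + 1) ω = max 0 ((1 - α n ω) * W n ω + α n ω * w (n + 1) ω)) :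
    ∀ᵐ ω ∂μ, Tendsto (fun n => W n ω) atTop (nhds 0) := by
  filter_upwards [ae_exists_tendsto_sum_mul_of_summable_sq hαmeas hwmeas hwbd hwzero,
    hαdiv, hαsq] with ω hM hdiv hsq
  obtain ⟨L, hL⟩ := hM hsq
  exact tendsto_zero_of_tendsto_sum_mul (fun n => (hα01 n ω).1) (fun n => (hα01 n ω).2) hdiv hL
    (fun n => hWrec n ω)

theorem positive_incurred_noise_tendsto_zero
    {Ω : Type} {m0 : MeasurableSpace Ω} (μ : Measure Ω) [IsProbabilityMeasure μ]
    (ℱ : Filtration ℕ m0)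
    (α : ℕ → Ω → ℝ)
    (hα01 : ∀ n ω, α n ω ∈ Set.Icc (0 : ℝ) 1)
    (hαmeas : ∀ n, Measurable[ℱ n] (α n))
    (hαdiv : ∀ᵐ ω ∂μ, Tendsto (fun N => ∑ n ∈ Finset.range N, α n ω) atTop atTop)
    (hαsq : ∀ᵐ ω ∂μ, Summable fun n => (α n ω) ^ 2)
    (w : ℕ → Ω → ℝ) (K : ℝ) (hK : 0 < K)
    (hwmeas : ∀ n, Measurable[ℱ (n + 1)] (w (n + 1)))
    (hwbd : ∀ n, ∀ᵐ ω ∂μ, |w (n + 1) ω| ≤ K)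
    (hwzero : ∀ n, μ[w (n + 1) | ℱ n] =ᵐ[μ] 0)
    (W : ℕ → Ω → ℝ)
    (hW0 : ∀ ω, W 0 ω = 0)
    (hWrec : ∀ n ω, W (n + 1) ω = max 0 ((1 - α n ω) * W n ω + α n ω * w (n + 1) ω)) :
    ∀ᵐ ω ∂μ, Tendsto (fun n => W n ω) atTop (nhds 0) :=
  positive_incurred_noise_tendsto_zero_general μ ℱ α hα01 hαmeas hαdiv hαsq w K hwmeas hwbd hwzero W
    hWrec
end

section
/- In the regenerative optimal stopping model, for every t ≤ T the optimal value function V*_t(x, y) is nondecreasing with respect to the componentwise order on X × Y: if x ≤ x' and y^i ≤ y'^i for all i = 1,…,n−1, then V*_t(x, y) ≤ V*_t(x', y'). -/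
/-- Next value of the asset: it depreciates by `e`, truncated at `0`. -/
def xDec (Xmax : ℕ) (x : Fin (Xmax + 1)) (e : ℕ) : Fin (Xmax + 1) :=
  ⟨x.val - e, by have := x.isLt; omega⟩

/-- Next value of the external factors: factor `i` decrements by one if `B i`, truncated
at `0`. -/
def yDec {k : ℕ} (Ymax : Fin k → ℕ) (y : ∀ i, Fin (Ymax i + 1)) (B : Fin k → Bool) :
    ∀ i, Fin (Ymax i + 1) :=
  fun i => ⟨(y i).val - (if B i then 1 else 0), by have := (y i).isLt; omega⟩

/-- Contribution function of the regenerative optimal stopping problem: revenue `P` if the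
asset has positive value, penalty `F` if it is worthless, and the replacement cost
`r(x, y)` is paid unless we wait (`a = false`) while the asset has positive value. -/
def stopContr {k : ℕ} (Xmax : ℕ) (Ymax : Fin k → ℕ) (P F : ℝ)
    (r : Fin (Xmax + 1) → (∀ i, Fin (Ymax i + 1)) → ℝ)
    (x : Fin (Xmax + 1)) (y : ∀ i, Fin (Ymax i + 1)) (a : Bool) : ℝ :=
  P * (if 0 < x.val then 1 else 0) - F * (if x.val = 0 then 1 else 0)
    - r x y * (1 - (if a = false ∧ 0 < x.val then 1 else 0))

/-- Expected next-period value under the regenerative optimal stopping dynamics: if the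
asset is replaced (`a = true`) or worthless, the system regenerates to `(Xmax, Ymax)`;
otherwise each factor `i` decrements by a Bernoulli(`p i`) amount and the asset value
depreciates by a uniform amount on `{1, …, emax}` with probability `f⁻(x, y)`. -/
noncomputable def stopExpect {k : ℕ} (Xmax : ℕ) (Ymax : Fin k → ℕ) (emax : ℕ)
    (pB : Fin k → ℝ)
    (fm : Fin (Xmax + 1) → (∀ i, Fin (Ymax i + 1)) → ℝ)
    (Vt1 : Fin (Xmax + 1) → (∀ i, Fin (Ymax i + 1)) → ℝ)
    (x : Fin (Xmax + 1)) (y : ∀ i, Fin (Ymax i + 1)) (a : Bool) : ℝ :=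
  if a = true ∨ x.val = 0 then Vt1 (Fin.last Xmax) (fun i => Fin.last (Ymax i))
  else
    ∑ B : Fin k → Bool,
      (∏ i, if B i then pB i else 1 - pB i) *
        ((1 - fm x y) * Vt1 x (yDec Ymax y B) +
          fm x y * ((emax : ℝ)⁻¹ *
            ∑ e ∈ Finset.Icc 1 emax, Vt1 (xDec Xmax x e) (yDec Ymax y B)))


/-! Backward induction on `t`. If `V*_{t+1}` is monotone, so is each action value: replacing
earns the monotone revenue minus the antitone cost `r` plus the constant `V*_{t+1}(Xmax, Ymax)`;
at `x = 0` waiting coincides with replacing; for `x > 0` waiting earns `P` plus an expectation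
in which every successor state moves up with `(x, y)`, while the smaller depreciation
probability `f⁻(x', y') ≤ f⁻(x, y)` moves weight away from the depreciated states, which are
worth at most the undepreciated one. -/

open Finset Function
open scoped BigOperators

lemma inv_mul_sum_Icc_eq_expect (n : ℕ) (g : ℕ → ℝ) :
    (n : ℝ)⁻¹ * ∑ e ∈ Icc 1 n, g e = 𝔼 e ∈ Icc 1 n, g e := by
  rw [expect_eq_sum_div_card, Nat.card_Icc, Nat.add_sub_cancel, inv_mul_eq_div]

lemma one_sub_mul_add_mul_le_one_sub_mul_add_mul {f f' A A' m m' : ℝ}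
    (hf' : f' ≤ f) (hf : f ≤ 1) (hf'0 : 0 ≤ f') (hA : A ≤ A') (hm : m ≤ m') (hm' : m' ≤ A') :
    (1 - f) * A + f * m ≤ (1 - f') * A' + f' * m' :=
  calc (1 - f) * A + f * m ≤ (1 - f) * A' + f * m' := by gcongr; linarith
    _ ≤ (1 - f') * A' + f' * m' := by nlinarith

lemma monotone_revenue {P F : ℝ} (h : -F ≤ P) :
    Monotone fun n : ℕ => P * (if 0 < n then 1 else 0) - F * (if n = 0 then 1 else 0) := by
  intro n n' hn
  rcases Nat.eq_zero_or_pos n with rfl | hpos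
  · rcases Nat.eq_zero_or_pos n' with rfl | hpos'
    · rfl
    · simp [hpos'.ne', hpos', h]
  · simp [hpos.ne', hpos, (hpos.trans_le hn).ne', hpos.trans_le hn]

lemma xDec_mono {Xmax : ℕ} {x x' : Fin (Xmax + 1)} (h : x ≤ x') (e : ℕ) :
    xDec Xmax x e ≤ xDec Xmax x' e := by
  simp only [xDec, Fin.mk_le_mk]; have : x.val ≤ x'.val := h; omega

lemma xDec_le {Xmax : ℕ} (x : Fin (Xmax + 1)) (e : ℕ) : xDec Xmax x e ≤ x := by
  simp only [xDec, Fin.le_def]; omega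

lemma yDec_mono {k : ℕ} {Ymax : Fin k → ℕ} {y y' : ∀ i, Fin (Ymax i + 1)} (h : y ≤ y')
    (B : Fin k → Bool) : yDec Ymax y B ≤ yDec Ymax y' B := fun i => by
  simp only [yDec, Fin.mk_le_mk]; have : (y i).val ≤ (y' i).val := h i; omega

lemma prod_bernoulli_nonneg {k : ℕ} {pB : Fin k → ℝ} (hpB : ∀ i, pB i ∈ Set.Icc (0 : ℝ) 1)
    (B : Fin k → Bool) : 0 ≤ ∏ i, if B i then pB i else 1 - pB i :=
  prod_nonneg fun i _ => by
    obtain ⟨h0, h1⟩ := hpB i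
    split_ifs <;> linarith

section Model

variable {k Xmax : ℕ} {Ymax : Fin k → ℕ} {emax : ℕ} {P F : ℝ} {pB : Fin k → ℝ}
  {r fm V : Fin (Xmax + 1) → (∀ i, Fin (Ymax i + 1)) → ℝ}

variable (Xmax Ymax emax P F pB r fm) in
noncomputable def stopQ (V : Fin (Xmax + 1) → (∀ i, Fin (Ymax i + 1)) → ℝ)
    (x : Fin (Xmax + 1)) (y : ∀ i, Fin (Ymax i + 1)) (a : Bool) : ℝ :=
  stopContr Xmax Ymax P F r x y a + stopExpect Xmax Ymax emax pB fm V x y a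

lemma stopQ_false_of_val_eq_zero {x : Fin (Xmax + 1)} (hx : x.val = 0)
    (y : ∀ i, Fin (Ymax i + 1)) :
    stopQ Xmax Ymax emax P F pB r fm V x y false =
      stopQ Xmax Ymax emax P F pB r fm V x y true := by
  simp [stopQ, stopContr, stopExpect, hx]

lemma stopContr_false_of_val_ne_zero {x : Fin (Xmax + 1)} (hx : x.val ≠ 0)
    (y : ∀ i, Fin (Ymax i + 1)) : stopContr Xmax Ymax P F r x y false = P := by
  simp [stopContr, hx, Nat.pos_of_ne_zero hx]

lemma stopQ_true_mono (hPF : -F ≤ P) (hr : Antitone (uncurry r)) {x x' : Fin (Xmax + 1)}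
    {y y' : ∀ i, Fin (Ymax i + 1)} (hx : x ≤ x') (hy : y ≤ y') :
    stopQ Xmax Ymax emax P F pB r fm V x y true ≤
      stopQ Xmax Ymax emax P F pB r fm V x' y' true := by
  have hrev := monotone_revenue hPF (show x.val ≤ x'.val from hx)
  have hr' : r x' y' ≤ r x y := hr (Prod.mk_le_mk.2 ⟨hx, hy⟩)
  simp only [stopQ, stopContr, stopExpect, Bool.true_eq_false, false_and, if_false, true_or,
    if_true, sub_zero, mul_one] at hrev ⊢
  linarith

lemma stopExpect_false_mono (hV : Monotone (uncurry V)) (hpB : ∀ i, pB i ∈ Set.Icc (0 : ℝ) 1)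
    (hfm01 : ∀ x y, fm x y ∈ Set.Icc (0 : ℝ) 1) (hfm : Antitone (uncurry fm)) (hemax : 1 ≤ emax)
    {x x' : Fin (Xmax + 1)} {y y' : ∀ i, Fin (Ymax i + 1)} (hx : x ≤ x') (hy : y ≤ y')
    (hx0 : x.val ≠ 0) :
    stopExpect Xmax Ymax emax pB fm V x y false ≤
      stopExpect Xmax Ymax emax pB fm V x' y' false := by
  have hx0' : x'.val ≠ 0 := fun h => hx0 (Nat.le_zero.1 (h ▸ hx))
  simp only [stopExpect, Bool.false_eq_true, false_or, hx0, hx0', if_false,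
    inv_mul_sum_Icc_eq_expect]
  refine sum_le_sum fun B _ => mul_le_mul_of_nonneg_left ?_ (prod_bernoulli_nonneg hpB B)
  have hyB := yDec_mono hy B
  refine one_sub_mul_add_mul_le_one_sub_mul_add_mul (hfm (Prod.mk_le_mk.2 ⟨hx, hy⟩))
    (hfm01 x y).2 (hfm01 x' y').1 (hV (Prod.mk_le_mk.2 ⟨hx, hyB⟩)) ?_ ?_
  · exact expect_le_expect fun e _ => hV (Prod.mk_le_mk.2 ⟨xDec_mono hx e, hyB⟩)
  · exact expect_le (nonempty_Icc.2 hemax) fun e _ =>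
      hV (Prod.mk_le_mk.2 ⟨xDec_le x' e, le_rfl⟩)

lemma monotone_max_stopQ (hV : Monotone (uncurry V)) (hPF : -F ≤ P)
    (hpB : ∀ i, pB i ∈ Set.Icc (0 : ℝ) 1) (hr : Antitone (uncurry r))
    (hfm01 : ∀ x y, fm x y ∈ Set.Icc (0 : ℝ) 1) (hfm : Antitone (uncurry fm)) (hemax : 1 ≤ emax) :
    Monotone (uncurry fun x y => max (stopQ Xmax Ymax emax P F pB r fm V x y false)
      (stopQ Xmax Ymax emax P F pB r fm V x y true)) := by
  rintro ⟨x, y⟩ ⟨x', y'⟩ ⟨hx, hy⟩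
  have hQtrue := stopQ_true_mono (V := V) (emax := emax) (pB := pB) (fm := fm) hPF hr hx hy
  refine max_le ?_ (hQtrue.trans (le_max_right _ _))
  by_cases hx0 : x.val = 0
  · rw [stopQ_false_of_val_eq_zero hx0]
    exact hQtrue.trans (le_max_right _ _)
  · refine le_trans ?_ (le_max_left _ _)
    have hx0' : x'.val ≠ 0 := fun h => hx0 (Nat.le_zero.1 (h ▸ hx))
    have hwait := stopExpect_false_mono hV hpB hfm01 hfm hemax hx hy hx0
    simp only [stopQ, stopContr_false_of_val_ne_zero hx0, stopContr_false_of_val_ne_zero hx0']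
    linarith

end Model

theorem regenerativeStopping_value_monotone_general
    (k : ℕ) (T : ℕ)
    (Xmax : ℕ) (Ymax : Fin k → ℕ)
    (emax : ℕ) (hemax : 1 ≤ emax)
    (P F : ℝ) (hP : 0 < P) (hF : 0 < F)
    (pB : Fin k → ℝ) (hpB : ∀ i, pB i ∈ Set.Icc (0 : ℝ) 1)
    (r : Fin (Xmax + 1) → (∀ i, Fin (Ymax i + 1)) → ℝ)
    (hr : ∀ x x' y y', x ≤ x' → (∀ i, y i ≤ y' i) → r x' y' ≤ r x y)
    (fm : Fin (Xmax + 1) → (∀ i, Fin (Ymax i + 1)) → ℝ)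
    (hfm01 : ∀ x y, fm x y ∈ Set.Icc (0 : ℝ) 1)
    (hfm : ∀ x x' y y', x ≤ x' → (∀ i, y i ≤ y' i) → fm x' y' ≤ fm x y)
    (Vstar : ℕ → Fin (Xmax + 1) → (∀ i, Fin (Ymax i + 1)) → ℝ)
    (hVT : ∀ x y, Vstar T x y = 0)
    (hVt : ∀ t, t < T → ∀ x y, Vstar t x y =
      max (stopContr Xmax Ymax P F r x y false +
            stopExpect Xmax Ymax emax pB fm (Vstar (t + 1)) x y false)
          (stopContr Xmax Ymax P F r x y true +
            stopExpect Xmax Ymax emax pB fm (Vstar (t + 1)) x y true)) :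
    ∀ t ≤ T, ∀ x x' y y', x ≤ x' → (∀ i, y i ≤ y' i) → Vstar t x y ≤ Vstar t x' y' := by
  have hr' : Antitone (uncurry r) := fun _ _ h => hr _ _ _ _ h.1 h.2
  have hfm' : Antitone (uncurry fm) := fun _ _ h => hfm _ _ _ _ h.1 h.2
  intro t ht
  suffices Monotone (uncurry (Vstar t)) from fun x x' y y' hx hy => this (Prod.mk_le_mk.2 ⟨hx, hy⟩)
  induction ht using Nat.decreasingInduction with
  | self => rw [funext₂ hVT]; exact monotone_const
  | of_succ t ht ih =>
    rw [funext₂ (hVt t ht)]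
    exact monotone_max_stopQ ih (by linarith) hpB hr' hfm01 hfm' hemax

theorem regenerativeStopping_value_monotone
    (k : ℕ) (hk : 1 ≤ k) (T : ℕ) (hT : 1 ≤ T)
    (Xmax : ℕ) (hXmax : 1 ≤ Xmax) (Ymax : Fin k → ℕ) (hYmax : ∀ i, 1 ≤ Ymax i)
    (emax : ℕ) (hemax : 1 ≤ emax)
    (P F : ℝ) (hP : 0 < P) (hF : 0 < F)
    (pB : Fin k → ℝ) (hpB : ∀ i, pB i ∈ Set.Icc (0 : ℝ) 1)
    (r : Fin (Xmax + 1) → (∀ i, Fin (Ymax i + 1)) → ℝ)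
    (hr : ∀ x x' y y', x ≤ x' → (∀ i, y i ≤ y' i) → r x' y' ≤ r x y)
    (fm : Fin (Xmax + 1) → (∀ i, Fin (Ymax i + 1)) → ℝ)
    (hfm01 : ∀ x y, fm x y ∈ Set.Icc (0 : ℝ) 1)
    (hfm : ∀ x x' y y', x ≤ x' → (∀ i, y i ≤ y' i) → fm x' y' ≤ fm x y)
    (Vstar : ℕ → Fin (Xmax + 1) → (∀ i, Fin (Ymax i + 1)) → ℝ)
    (hVT : ∀ x y, Vstar T x y = 0)
    (hVt : ∀ t, t < T → ∀ x y, Vstar t x y =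
      max (stopContr Xmax Ymax P F r x y false +
            stopExpect Xmax Ymax emax pB fm (Vstar (t + 1)) x y false)
          (stopContr Xmax Ymax P F r x y true +
            stopExpect Xmax Ymax emax pB fm (Vstar (t + 1)) x y true)) :
    ∀ t ≤ T, ∀ x x' y y', x ≤ x' → (∀ i, y i ≤ y' i) → Vstar t x y ≤ Vstar t x' y' :=
  regenerativeStopping_value_monotone_general k T Xmax Ymax emax hemax P F hP hF pB hpB r hr fm
    hfm01 hfm Vstar hVT hVt
end

section
/- In the energy storage model, for every t ≤ T the optimal value function V*_t(r, e, p, d) is nondecreasing in each of r, e, p and d: if r ≤ r', e ≤ e', p ≤ p' and d ≤ d' (all states in the admissible hyperrectangle), then V*_t(r, e, p, d) ≤ V*_t(r', e', p', d'). -/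
/-- `clip v a b = min (max v a) b`. -/
def clip (v a b : ℤ) : ℤ := min (max v a) b

/-- The feasible set of allocation decisions `x = (x_ed, x_md, x_rd, x_er, x_rm)` in the
energy storage problem, for a state with storage level `r`, renewable supply `e`, and
demand `d`. -/
def storFeasible (Rmax γc γd : ℤ) (r e d : ℤ) (xed xmd xrd xer xrm : ℕ) : Prop :=
  (xed : ℤ) + xrd + xmd = d ∧
    (xrd : ℤ) + xrm ≤ r ∧
    (xer : ℤ) + xed ≤ e ∧
    (xrd : ℤ) + xrm ≤ γd ∧
    (xer : ℤ) ≤ min (Rmax - r) γc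

/-- Membership of a state `(r, e, p, d)` in the admissible hyperrectangle. -/
def storInBox (Rmax Emin Emax Pmin Pmax Dmin Dmax : ℤ) (r e p d : ℤ) : Prop :=
  0 ≤ r ∧ r ≤ Rmax ∧ Emin ≤ e ∧ e ≤ Emax ∧ Pmin ≤ p ∧ p ≤ Pmax ∧ Dmin ≤ d ∧ d ≤ Dmax

/-!
Backward induction on `t`. Given a feasible decision at a smaller state, keep `x_ed`, `x_rd`,
`x_rm`, buy the extra demand `d' - d` from the market and cap `x_er` at the remaining capacity
`Rmax - r'`. The result is feasible at the larger state, has the same net purchase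
`d + x_rm - x_md ≥ 0` (which is then priced at `p' ≥ p`), and leads to a componentwise larger
next state, where `V*_{t+1}` is larger by induction. Finitely many decisions are feasible, so
the supremum at the larger state dominates every value at the smaller one.
-/

lemma clip_mono {a b v v' : ℤ} (h : v ≤ v') : clip v a b ≤ clip v' a b :=
  min_le_min_right b (max_le_max_right a h)

lemma le_clip {a b : ℤ} (v : ℤ) (hab : a ≤ b) : a ≤ clip v a b :=
  le_min (le_max_right _ _) hab

lemma clip_le (a b v : ℤ) : clip v a b ≤ b := min_le_right _ _

section Bellman

variable (Rmax Emin Emax Pmin Pmax Dmin Dmax γc γd : ℤ)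

def StorValueMonotone (V : ℤ → ℤ → ℤ → ℤ → ℝ) : Prop :=
  ∀ r e p d r' e' p' d',
    storInBox Rmax Emin Emax Pmin Pmax Dmin Dmax r e p d →
    storInBox Rmax Emin Emax Pmin Pmax Dmin Dmax r' e' p' d' →
    r ≤ r' → e ≤ e' → p ≤ p' → d ≤ d' → V r e p d ≤ V r' e' p' d'

variable {W : Type} [Fintype W] (q : W → ℝ) (Ehat Phat Dhat : W → ℤ)
  (V : ℤ → ℤ → ℤ → ℤ → ℝ)

def storDecisionValue (r e p d : ℤ) (xmd xrd xer xrm : ℕ) : ℝ :=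
  (p : ℝ) * ((d : ℝ) + (xrm : ℝ) - (xmd : ℝ)) +
    ∑ w : W, q w *
      V (r + (xer : ℤ) - (xrd : ℤ) - (xrm : ℤ))
        (clip (e + Ehat w) Emin Emax) (clip (p + Phat w) Pmin Pmax) (clip (d + Dhat w) Dmin Dmax)

def storBellmanValues (r e p d : ℤ) : Set ℝ :=
  {v : ℝ | ∃ xed xmd xrd xer xrm : ℕ,
    storFeasible Rmax γc γd r e d xed xmd xrd xer xrm ∧
    v = storDecisionValue Emin Emax Pmin Pmax Dmin Dmax q Ehat Phat Dhat V r e p d xmd xrd xer xrm}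

variable {Rmax Emin Emax Pmin Pmax Dmin Dmax γc γd}

lemma storInBox_next {r e p d : ℤ} {xed xmd xrd xer xrm : ℕ}
    (hb : storInBox Rmax Emin Emax Pmin Pmax Dmin Dmax r e p d)
    (hx : storFeasible Rmax γc γd r e d xed xmd xrd xer xrm) (ε π δ : ℤ) :
    storInBox Rmax Emin Emax Pmin Pmax Dmin Dmax (r + (xer : ℤ) - (xrd : ℤ) - (xrm : ℤ))
      (clip (e + ε) Emin Emax) (clip (p + π) Pmin Pmax) (clip (d + δ) Dmin Dmax) := by
  obtain ⟨-, hxr, -, -, hxer⟩ := hx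
  obtain ⟨hr0, hrR, hEe, heE, hPp, hpP, hDd, hdD⟩ := hb
  exact ⟨by omega, by omega, le_clip _ (hEe.trans heE), clip_le .., le_clip _ (hPp.trans hpP),
    clip_le .., le_clip _ (hDd.trans hdD), clip_le ..⟩

lemma storFeasible_marketOnly {r e d : ℤ} (hr0 : 0 ≤ r) (hrR : r ≤ Rmax) (he : 0 ≤ e)
    (hd : 0 ≤ d) (hγc : 0 ≤ γc) (hγd : 0 ≤ γd) :
    storFeasible Rmax γc γd r e d 0 d.toNat 0 0 0 :=
  ⟨by omega, by omega, by omega, by omega, by omega⟩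

lemma storFeasible_finite (r e d : ℤ) :
    {x : ℕ × ℕ × ℕ × ℕ × ℕ |
      storFeasible Rmax γc γd r e d x.1 x.2.1 x.2.2.1 x.2.2.2.1 x.2.2.2.2}.Finite := by
  set N := d.toNat + γc.toNat + γd.toNat
  refine (Set.finite_Iic (N, N, N, N, N)).subset ?_
  rintro ⟨xed, xmd, xrd, xer, xrm⟩ ⟨hd, -, -, hγd, hγc⟩
  simp only [Set.mem_Iic, Prod.mk_le_mk] at *
  omega

lemma bddAbove_storBellmanValues (r e p d : ℤ) :
    BddAbove (storBellmanValues Rmax Emin Emax Pmin Pmax Dmin Dmax γc γd q Ehat Phat Dhat V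
      r e p d) := by
  refine (((storFeasible_finite (Rmax := Rmax) (γc := γc) (γd := γd) r e d).image fun x =>
    storDecisionValue Emin Emax Pmin Pmax Dmin Dmax q Ehat Phat Dhat V r e p d
      x.2.1 x.2.2.1 x.2.2.2.1 x.2.2.2.2).subset ?_).bddAbove
  rintro v ⟨xed, xmd, xrd, xer, xrm, hx, rfl⟩
  exact ⟨(xed, xmd, xrd, xer, xrm), hx, rfl⟩

lemma storFeasible_of_le {r e d r' e' d' : ℤ} {xed xmd xrd xer xrm : ℕ}
    (hx : storFeasible Rmax γc γd r e d xed xmd xrd xer xrm)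
    (hr'R : r' ≤ Rmax) (hr : r ≤ r') (he : e ≤ e') (hd : d ≤ d') :
    ∃ xmd' xer' : ℕ, storFeasible Rmax γc γd r' e' d' xed xmd' xrd xer' xrm ∧
      d' - (xmd' : ℤ) = d - xmd ∧ r + (xer : ℤ) ≤ r' + xer' := by
  unfold storFeasible at *
  exact ⟨xmd + (d' - d).toNat, min xer (Rmax - r').toNat, by omega, by omega, by omega⟩

lemma storDecisionValue_le {r e p d r' e' p' d' : ℤ} {xmd xrd xer xrm xmd' xer' : ℕ}
    (hV : StorValueMonotone Rmax Emin Emax Pmin Pmax Dmin Dmax V) (hq : ∀ w, 0 ≤ q w)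
    (hb : ∀ w, storInBox Rmax Emin Emax Pmin Pmax Dmin Dmax
      (r + (xer : ℤ) - (xrd : ℤ) - (xrm : ℤ))
      (clip (e + Ehat w) Emin Emax) (clip (p + Phat w) Pmin Pmax) (clip (d + Dhat w) Dmin Dmax))
    (hb' : ∀ w, storInBox Rmax Emin Emax Pmin Pmax Dmin Dmax
      (r' + (xer' : ℤ) - (xrd : ℤ) - (xrm : ℤ))
      (clip (e' + Ehat w) Emin Emax) (clip (p' + Phat w) Pmin Pmax) (clip (d' + Dhat w) Dmin Dmax))
    (hbuy : 0 ≤ d + (xrm : ℤ) - xmd) (hnet : d' - (xmd' : ℤ) = d - xmd)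
    (hr : r + (xer : ℤ) ≤ r' + xer') (he : e ≤ e') (hp : p ≤ p') (hd : d ≤ d') :
    storDecisionValue Emin Emax Pmin Pmax Dmin Dmax q Ehat Phat Dhat V r e p d xmd xrd xer xrm ≤
      storDecisionValue Emin Emax Pmin Pmax Dmin Dmax q Ehat Phat Dhat V r' e' p' d'
        xmd' xrd xer' xrm := by
  have hnetℝ : (d' : ℝ) + xrm - xmd' = d + xrm - xmd := by
    have : d' + (xrm : ℤ) - xmd' = d + xrm - xmd := by omega
    exact_mod_cast this
  have hbuyℝ : (0 : ℝ) ≤ d + xrm - xmd := by exact_mod_cast hbuy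
  unfold storDecisionValue
  rw [hnetℝ]
  gcongr with w
  · exact hq w
  · exact hV _ _ _ _ _ _ _ _ (hb w) (hb' w) (by omega) (clip_mono (by omega))
      (clip_mono (by omega)) (clip_mono (by omega))

theorem StorValueMonotone.sSup_storBellmanValues
    (hV : StorValueMonotone Rmax Emin Emax Pmin Pmax Dmin Dmax V)
    (hq : ∀ w, 0 ≤ q w) (hE : 0 ≤ Emin) (hD : 0 ≤ Dmin) (hγc : 0 ≤ γc)
    (hγd : 0 ≤ γd) :
    StorValueMonotone Rmax Emin Emax Pmin Pmax Dmin Dmax fun r e p d =>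
      sSup (storBellmanValues Rmax Emin Emax Pmin Pmax Dmin Dmax γc γd q Ehat Phat Dhat V
        r e p d) := by
  intro r e p d r' e' p' d' hb hb' hr he hp hd
  obtain ⟨hr0, hrR, hEe, -, -, -, hDd, -⟩ := id hb
  -- Nonemptiness is needed: `sSup ∅ = 0` in `ℝ`.
  refine csSup_le ⟨_, _, _, _, _, _,
    storFeasible_marketOnly hr0 hrR (hE.trans hEe) (hD.trans hDd) hγc hγd, rfl⟩ ?_
  rintro v ⟨xed, xmd, xrd, xer, xrm, hx, rfl⟩
  obtain ⟨xmd', xer', hx', hnet, hnext⟩ := storFeasible_of_le hx hb'.2.1 hr he hd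
  refine le_csSup_of_le (bddAbove_storBellmanValues q Ehat Phat Dhat V r' e' p' d')
    ⟨xed, xmd', xrd, xer', xrm, hx', rfl⟩ ?_
  exact storDecisionValue_le q Ehat Phat Dhat V hV hq
    (fun w => storInBox_next hb hx _ _ _) (fun w => storInBox_next hb' hx' _ _ _)
    (by unfold storFeasible at hx; omega) hnet hnext he hp hd

end Bellman

theorem energyStorage_value_monotone_general
    {W : Type} [Fintype W]
    (T : ℕ)
    (Rmax Emin Emax Pmin Pmax Dmin Dmax γc γd : ℤ)
    (hE : 0 ≤ Emin)
    (hD : 0 ≤ Dmin) (hγc : 0 ≤ γc) (hγd : 0 ≤ γd)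
    (q : ℕ → W → ℝ) (hq0 : ∀ t w, 0 ≤ q t w)
    (Ehat Phat Dhat : ℕ → W → ℤ)
    (Vstar : ℕ → ℤ → ℤ → ℤ → ℤ → ℝ)
    (hVT : ∀ r e p d, storInBox Rmax Emin Emax Pmin Pmax Dmin Dmax r e p d →
      Vstar T r e p d = 0)
    (hVt : ∀ t, t < T → ∀ r e p d, storInBox Rmax Emin Emax Pmin Pmax Dmin Dmax r e p d →
      Vstar t r e p d =
        sSup {v : ℝ | ∃ xed xmd xrd xer xrm : ℕ,
          storFeasible Rmax γc γd r e d xed xmd xrd xer xrm ∧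
          v = (p : ℝ) * ((d : ℝ) + (xrm : ℝ) - (xmd : ℝ)) +
            ∑ w : W, q t w *
              Vstar (t + 1) (r + (xer : ℤ) - (xrd : ℤ) - (xrm : ℤ))
                (clip (e + Ehat t w) Emin Emax)
                (clip (p + Phat t w) Pmin Pmax)
                (clip (d + Dhat t w) Dmin Dmax)}) :
    ∀ t ≤ T, ∀ r e p d r' e' p' d',
      storInBox Rmax Emin Emax Pmin Pmax Dmin Dmax r e p d →
      storInBox Rmax Emin Emax Pmin Pmax Dmin Dmax r' e' p' d' →
      r ≤ r' → e ≤ e' → p ≤ p' → d ≤ d' →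
      Vstar t r e p d ≤ Vstar t r' e' p' d' := by
  intro t ht
  refine Nat.decreasingInduction (fun t htT ih => ?_) ?_ ht
  · intro r e p d r' e' p' d' hb hb'
    rw [hVt t htT _ _ _ _ hb, hVt t htT _ _ _ _ hb']
    exact StorValueMonotone.sSup_storBellmanValues (q t) (Ehat t) (Phat t) (Dhat t)
      (Vstar (t + 1)) ih (hq0 t) hE hD hγc hγd r e p d r' e' p' d' hb hb'
  · intro r e p d r' e' p' d' hb hb' _ _ _ _
    rw [hVT _ _ _ _ hb, hVT _ _ _ _ hb']

theorem energyStorage_value_monotone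
    {W : Type} [Fintype W]
    (T : ℕ) (hT : 1 ≤ T)
    (Rmax Emin Emax Pmin Pmax Dmin Dmax γc γd : ℤ)
    (hR : 0 ≤ Rmax) (hE : 0 ≤ Emin) (hEE : Emin ≤ Emax) (hPq : 0 ≤ Pmin) (hPP : Pmin ≤ Pmax)
    (hD : 0 ≤ Dmin) (hDD : Dmin ≤ Dmax) (hγc : 0 ≤ γc) (hγd : 0 ≤ γd)
    (q : ℕ → W → ℝ) (hq0 : ∀ t w, 0 ≤ q t w) (hq1 : ∀ t, ∑ w : W, q t w = 1)
    (Ehat Phat Dhat : ℕ → W → ℤ)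
    (Vstar : ℕ → ℤ → ℤ → ℤ → ℤ → ℝ)
    (hVT : ∀ r e p d, storInBox Rmax Emin Emax Pmin Pmax Dmin Dmax r e p d →
      Vstar T r e p d = 0)
    (hVt : ∀ t, t < T → ∀ r e p d, storInBox Rmax Emin Emax Pmin Pmax Dmin Dmax r e p d →
      Vstar t r e p d =
        sSup {v : ℝ | ∃ xed xmd xrd xer xrm : ℕ,
          storFeasible Rmax γc γd r e d xed xmd xrd xer xrm ∧
          v = (p : ℝ) * ((d : ℝ) + (xrm : ℝ) - (xmd : ℝ)) +
            ∑ w : W, q t w *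
              Vstar (t + 1) (r + (xer : ℤ) - (xrd : ℤ) - (xrm : ℤ))
                (clip (e + Ehat t w) Emin Emax)
                (clip (p + Phat t w) Pmin Pmax)
                (clip (d + Dhat t w) Dmin Dmax)}) :
    ∀ t ≤ T, ∀ r e p d r' e' p' d',
      storInBox Rmax Emin Emax Pmin Pmax Dmin Dmax r e p d →
      storInBox Rmax Emin Emax Pmin Pmax Dmin Dmax r' e' p' d' →
      r ≤ r' → e ≤ e' → p ≤ p' → d ≤ d' →
      Vstar t r e p d ≤ Vstar t r' e' p' d' :=
  energyStorage_value_monotone_general T Rmax Emin Emax Pmin Pmax Dmin Dmax γc γd hE hD hγc hγd q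
    hq0 Ehat Phat Dhat Vstar hVT hVt
end

section
/- Let V : S → ℝ be monotone, s^r ∈ S, z^r ∈ ℝ, and let V' : S → ℝ be any monotone function with V'(s^r) = z^r. Then the componentwise error of the projection is dominated by that of V': for every s ∈ S, |Π_M(s^r, z^r, V)(s) − V(s)| ≤ |V'(s) − V(s)|. -/
/-!
Every value of `Π_M(s^r, z^r, V)` lies between `V s` and `V' s`: at `s^r` it is `z^r = V' s^r`;
above `s^r` it is `max z^r (V s)` with `z^r ≤ V' s` by monotonicity of `V'`, and dually below
`s^r`; elsewhere it is `V s`. A point of the interval `[[V s, V' s]]` is no farther from `V s`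
than `V' s` is.
-/

open scoped Classical

open Set
open scoped Interval

section LinearOrder

variable {α : Type*} [LinearOrder α] {a b z : α}

theorem max_mem_uIcc_of_le (hzb : z ≤ b) : max z a ∈ [[a, b]] := by
  rcases le_total z a with hza | haz
  · rw [max_eq_right hza]
    exact left_mem_uIcc
  · rw [max_eq_left haz]
    exact mem_uIcc_of_le haz hzb

theorem min_mem_uIcc_of_le (hbz : b ≤ z) : min z a ∈ [[a, b]] := by
  rcases le_total a z with haz | hza
  · rw [min_eq_right haz]
    exact left_mem_uIcc
  · rw [min_eq_left hza]
    exact mem_uIcc_of_ge hbz hza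

end LinearOrder

theorem projMono_mem_uIcc {S : Type} [PartialOrder S] {sr : S} {zr : ℝ} {V V' : S → ℝ}
    (hV' : Monotone V') (hV'sr : V' sr = zr) (s : S) :
    projMono sr zr V s ∈ [[V s, V' s]] := by
  unfold projMono
  split_ifs with h_eq h_above h_below
  · subst h_eq
    rw [← hV'sr]
    exact right_mem_uIcc
  · exact max_mem_uIcc_of_le (hV'sr ▸ hV' h_above)
  · exact min_mem_uIcc_of_le (hV'sr ▸ hV' h_below)
  · exact left_mem_uIcc

theorem projMono_pointwise_error_le_general {S : Type} [PartialOrder S]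
    (V : S → ℝ) (sr : S) (zr : ℝ)
    (V' : S → ℝ) (hV' : Monotone V') (hV'sr : V' sr = zr) :
    ∀ s : S, |projMono sr zr V s - V s| ≤ |V' s - V s| := fun s =>
  abs_sub_left_of_mem_uIcc (projMono_mem_uIcc hV' hV'sr s)

theorem projMono_pointwise_error_le {S : Type} [Fintype S] [PartialOrder S]
    (V : S → ℝ) (hV : Monotone V) (sr : S) (zr : ℝ)
    (V' : S → ℝ) (hV' : Monotone V') (hV'sr : V' sr = zr) :
    ∀ s : S, |projMono sr zr V s - V s| ≤ |V' s - V s| :=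
  projMono_pointwise_error_le_general V sr zr V' hV' hV'sr
end
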